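/- Let G be a subgroup of W = V ⋊ S_4 such that the projection p : G → S_4 is surjective and the kernel of p restricted to G is exactly {(0, id), σ}, i.e. G ∩ V = {0, ε}. Then no element w ∈ V has G-orbit of cardinality exactly 4 under the affine action of G on V. -/

import Mathlib

/-!
The translation `σ` is central and acts as `u ↦ u + ε`, so an orbit of size four is the union
of two cosets ("blocks") of `{0, ε}`, which `G` permutes. An element `g` over a 3-cycle has
`g³ ∈ {1, σ}`, which fixes every block; as `g` permutes only two blocks, it fixes both. Taking
`w` and `x` in different blocks, every 3-cycle `ρ` therefore fixes `x - w` modulo `ε`, and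
the only such vectors are `0` and `ε`: so `x` and `w` lie in the same block after all.
-/

/-- `V = (ℤ/2ℤ)⁴`. -/
abbrev V4 : Type := Fin 4 → ZMod 2

/-- The action of `S₄` on `V = (ℤ/2ℤ)⁴` permuting the coordinates,
as an additive automorphism. -/
def permAddEquiv (π : Equiv.Perm (Fin 4)) : V4 ≃+ V4 where
  toFun w := fun i => w (π⁻¹ i)
  invFun w := fun i => w (π i)
  left_inv w := by funext i; simp
  right_inv w := by funext i; simp
  map_add' w₁ w₂ := rfl

/-- The corresponding homomorphism `S₄ →* Aut(V)` (with `V` written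
multiplicatively so as to form the semidirect product). -/
def permHom : Equiv.Perm (Fin 4) →* MulAut (Multiplicative V4) where
  toFun π := AddEquiv.toMultiplicative (permAddEquiv π)
  map_one' := by ext w; rfl
  map_mul' π₁ π₂ := by ext w; rfl

/-- `W = V ⋊ S₄`. -/
abbrev W4 : Type := SemidirectProduct (Multiplicative V4) (Equiv.Perm (Fin 4)) permHom

/-- `ε = (1,1,1,1) ∈ V`. -/
def epsV : V4 := fun _ => 1

/-- `σ = (ε, id) ∈ W`, the translation by `ε`. -/
def sigmaW : W4 := SemidirectProduct.inl (Multiplicative.ofAdd epsV)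

/-- The affine action of `W = V ⋊ S₄` on `V`: `(v, π) · w = π(w) + v`. -/
def aff (g : W4) (w : V4) : V4 :=
  fun i => w (g.right⁻¹ i) + Multiplicative.toAdd g.left i

open Equiv Submodule

lemma aff_one (u : V4) : aff 1 u = u := by
  funext i; simp [aff]

lemma aff_mul (g h : W4) (u : V4) : aff (g * h) u = aff g (aff h u) := by
  funext i
  simp only [aff, SemidirectProduct.mul_left, SemidirectProduct.mul_right, toAdd_mul, mul_inv_rev,
    Perm.mul_apply, Pi.add_apply]
  rw [add_assoc, add_comm (Multiplicative.toAdd g.left i)]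
  rfl

lemma aff_sigmaW (u : V4) : aff sigmaW u = u + epsV := by
  funext i; simp [aff, sigmaW]

lemma aff_sub_aff (g : W4) (u v : V4) : aff g u - aff g v = permAddEquiv g.right (u - v) := by
  funext i; simp [aff, permAddEquiv]

lemma permAddEquiv_epsV (π : Perm (Fin 4)) : permAddEquiv π epsV = epsV := rfl

/-- The blocks of an orbit are the cosets of this line: `epsLine.mkQ u` is the block of `u`. -/
def epsLine : Submodule (ZMod 2) V4 := ZMod 2 ∙ epsV

lemma mem_epsLine_iff {z : V4} : z ∈ epsLine ↔ z = 0 ∨ z = epsV := by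
  refine ⟨fun h => ?_, ?_⟩
  · obtain ⟨a, rfl⟩ := mem_span_singleton.mp h
    obtain rfl | rfl : a = 0 ∨ a = 1 := by clear h; revert a; decide
    · exact Or.inl (zero_smul _ _)
    · exact Or.inr (one_smul _ _)
  · rintro (rfl | rfl)
    · exact zero_mem _
    · exact mem_span_singleton_self _

lemma mkQ_eq_mkQ_iff {u v : V4} : epsLine.mkQ u = epsLine.mkQ v ↔ u = v ∨ u = v + epsV := by
  rw [mkQ_apply, mkQ_apply, Submodule.Quotient.eq, mem_epsLine_iff, sub_eq_zero,
    sub_eq_iff_eq_add, add_comm epsV]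

lemma mkQ_add_epsV (u : V4) : epsLine.mkQ (u + epsV) = epsLine.mkQ u :=
  mkQ_eq_mkQ_iff.mpr (Or.inr rfl)

lemma permAddEquiv_mem_epsLine_iff (π : Perm (Fin 4)) {z : V4} :
    permAddEquiv π z ∈ epsLine ↔ z ∈ epsLine := by
  rw [mem_epsLine_iff, mem_epsLine_iff, AddEquiv.map_eq_zero_iff, ← permAddEquiv_epsV π,
    (permAddEquiv π).apply_eq_iff_eq, permAddEquiv_epsV]

lemma mkQ_aff_eq_mkQ_aff_iff (g : W4) {u v : V4} :
    epsLine.mkQ (aff g u) = epsLine.mkQ (aff g v) ↔ epsLine.mkQ u = epsLine.mkQ v := by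
  simp only [mkQ_apply, Submodule.Quotient.eq, aff_sub_aff, permAddEquiv_mem_epsLine_iff]

lemma mkQ_eq_zero_of_forall_pow_three_eq_one {z : V4}
    (h : ∀ ρ : Perm (Fin 4), ρ ^ 3 = 1 → epsLine.mkQ (permAddEquiv ρ z) = epsLine.mkQ z) :
    epsLine.mkQ z = 0 := by
  -- the 3-cycles `(0 1 2)` and `(1 2 3)` already force this; checked on all 16 vectors
  have h₁ := h (swap 0 1 * swap 1 2) (by decide)
  have h₂ := h (swap 1 2 * swap 2 3) (by decide)
  rw [mkQ_eq_mkQ_iff] at h₁ h₂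
  rw [mkQ_apply, Submodule.Quotient.mk_eq_zero, mem_epsLine_iff]
  clear h
  revert z
  decide

lemma epsV_ne_zero : epsV ≠ 0 := fun h => by simpa [epsV] using congrFun h 0

lemma exists_mkQ_cover_of_ncard_eq_four {O : Set V4} (hO : O.ncard = 4)
    (hε : ∀ u ∈ O, u + epsV ∈ O) {w : V4} (hw : w ∈ O) :
    ∃ x ∈ O, epsLine.mkQ x ≠ epsLine.mkQ w ∧
      ∀ v ∈ O, epsLine.mkQ v = epsLine.mkQ w ∨ epsLine.mkQ v = epsLine.mkQ x := by
  obtain ⟨x, hxO, hxw⟩ : ∃ x ∈ O, epsLine.mkQ x ≠ epsLine.mkQ w := by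
    by_contra! h
    have hsub : O ⊆ {w, w + epsV} := fun v hv => mkQ_eq_mkQ_iff.mp (h v hv)
    have := (Set.ncard_le_ncard hsub).trans (Set.ncard_insert_le _ _)
    simp only [Set.ncard_singleton] at this
    omega
  refine ⟨x, hxO, hxw, fun v hv => ?_⟩
  have hsub : ({w, w + epsV, x, x + epsV} : Set V4) ⊆ O := by
    simp [Set.insert_subset_iff, hw, hε, hxO]
  have hne {a b : V4} (h : epsLine.mkQ a ≠ epsLine.mkQ b) : a ≠ b := fun e => h (congrArg _ e)
  have h4 : ({w, w + epsV, x, x + epsV} : Set V4).ncard = 4 := by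
    rw [Set.ncard_insert_of_notMem, Set.ncard_insert_of_notMem,
      Set.ncard_pair ((add_ne_left.mpr epsV_ne_zero).symm)]
    · simp only [Set.mem_insert_iff, Set.mem_singleton_iff, not_or]
      exact ⟨hne (by rw [mkQ_add_epsV]; exact hxw.symm),
        hne (by rw [mkQ_add_epsV, mkQ_add_epsV]; exact hxw.symm)⟩
    · simp only [Set.mem_insert_iff, Set.mem_singleton_iff, not_or]
      exact ⟨(add_ne_left.mpr epsV_ne_zero).symm, hne hxw.symm,
        hne (by rw [mkQ_add_epsV]; exact hxw.symm)⟩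
  rw [← Set.eq_of_subset_of_ncard_le hsub (by rw [hO, h4])] at hv
  rcases hv with rfl | rfl | rfl | rfl <;> simp only [mkQ_add_epsV, true_or, or_true]

def affOrbit (G : Subgroup W4) (w : V4) : Set V4 := {u | ∃ g ∈ G, aff g w = u}

section affOrbit

variable {G : Subgroup W4} {w : V4}

lemma mem_affOrbit_self : w ∈ affOrbit G w := ⟨1, G.one_mem, aff_one w⟩

lemma aff_mem_affOrbit {g : W4} (hg : g ∈ G) {u : V4} (hu : u ∈ affOrbit G w) :
    aff g u ∈ affOrbit G w := by
  obtain ⟨h, hh, rfl⟩ := hu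
  exact ⟨g * h, G.mul_mem hg hh, aff_mul g h w⟩

lemma add_epsV_mem_affOrbit (hσ : sigmaW ∈ G) {u : V4} (hu : u ∈ affOrbit G w) :
    u + epsV ∈ affOrbit G w :=
  aff_sigmaW u ▸ aff_mem_affOrbit hσ hu

lemma mkQ_aff_eq_of_right_pow_three_eq_one (hker : ∀ g ∈ G, g.right = 1 → g = 1 ∨ g = sigmaW)
    {x : V4} (hcover : ∀ v ∈ affOrbit G w,
      epsLine.mkQ v = epsLine.mkQ w ∨ epsLine.mkQ v = epsLine.mkQ x)
    {g : W4} (hg : g ∈ G) (hg3 : g.right ^ 3 = 1) {u : V4} (hu : u ∈ affOrbit G w) :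
    epsLine.mkQ (aff g u) = epsLine.mkQ u := by
  have hcube : epsLine.mkQ (aff g (aff g (aff g u))) = epsLine.mkQ u := by
    have hright : (g ^ 3).right = 1 := by
      rw [← SemidirectProduct.rightHom_eq_right, map_pow, SemidirectProduct.rightHom_eq_right, hg3]
    rw [← aff_mul, ← aff_mul, ← pow_three']
    rcases hker _ (pow_mem hg 3) hright with h | h
    · rw [h, aff_one]
    · rw [h, aff_sigmaW, mkQ_add_epsV]
  have hu₁ := aff_mem_affOrbit hg hu
  have hu₂ := aff_mem_affOrbit hg hu₁
  obtain h | h | h : epsLine.mkQ u = epsLine.mkQ (aff g u) ∨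
      epsLine.mkQ (aff g u) = epsLine.mkQ (aff g (aff g u)) ∨
      epsLine.mkQ u = epsLine.mkQ (aff g (aff g u)) := by
    rcases hcover _ hu with h₀ | h₀ <;> rcases hcover _ hu₁ with h₁ | h₁ <;>
      rcases hcover _ hu₂ with h₂ | h₂ <;> simp only [h₀, h₁, h₂, true_or, or_true]
  · exact h.symm
  · exact ((mkQ_aff_eq_mkQ_aff_iff g).mp h).symm
  · rw [(mkQ_aff_eq_mkQ_aff_iff g).mpr h, hcube]

end affOrbit

/-- **No orbit of size 4.**
Let `G ≤ W = V ⋊ S₄` be a subgroup such that the projection `p : G → S₄` is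
surjective and the kernel of `p` restricted to `G` is exactly `{1, σ}` (i.e.
`G ∩ V = {0, ε}`).  Then no element `w ∈ V` has `G`-orbit of cardinality
exactly 4 under the affine action of `G` on `V`. -/
theorem no_orbit_of_size_four
    (G : Subgroup W4)
    (hsurj : ∀ π : Equiv.Perm (Fin 4), ∃ g ∈ G, g.right = π)
    (hσ : sigmaW ∈ G)
    (hker : ∀ g ∈ G, g.right = 1 → g = 1 ∨ g = sigmaW) :
    ∀ w : V4, Set.ncard {u : V4 | ∃ g ∈ G, aff g w = u} ≠ 4 := by
  intro w hcard
  obtain ⟨x, hx, hxw, hcover⟩ := exists_mkQ_cover_of_ncard_eq_four hcard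
    (fun _ => add_epsV_mem_affOrbit hσ) mem_affOrbit_self
  have hfix : epsLine.mkQ (x - w) = 0 := mkQ_eq_zero_of_forall_pow_three_eq_one fun ρ hρ => by
    obtain ⟨g, hg, rfl⟩ := hsurj ρ
    rw [← aff_sub_aff, map_sub, map_sub,
      mkQ_aff_eq_of_right_pow_three_eq_one hker hcover hg hρ hx,
      mkQ_aff_eq_of_right_pow_three_eq_one hker hcover hg hρ mem_affOrbit_self]
  exact hxw (sub_eq_zero.mp (by rwa [map_sub] at hfix))
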